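/- arXiv:1303.7243 — 6 statements merged into one kernel-verified Lean document; each statement's English description precedes it below -/
import Mathlib

section
/- Let f: S² → S² be a quasiregular map of degree d ≥ 2. If z ∈ S² \ E(f), where E(f) is the set of points with finite backward orbit, then the sixth preimage set f^{−6}(z) contains at least 3 points. -/
/-!
If `f^{-(k+1)}(z)` has no more points than `f^{-k}(z)`, then `f` is injective on
`f^{-(k+1)}(z)`, so every point of `f^{-(k+1)}(z)` is the only preimage of its image and hence a
critical point of maximal index `d`. By Riemann–Hurwitz there are at most two such points.
If `f^{-6}(z)` had at most two points, the nondecreasing cardinalities `1 ≤ … ≤ #f^{-6}(z) ≤ 2`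
would stay constant over three consecutive steps, producing three subsets of equal size of a set
with at most two points; two of them coincide, so the sequence `f^{-k}(z)` is eventually periodic
and the backward orbit is finite.
-/

open Function Set

section Preimages

variable {α : Type*} {f : α → α}

theorem surjective_of_sum_fiber_eq {i : α → ℕ} {d : ℕ} (hd : 0 < d)
    (hfiber : ∀ a, (f ⁻¹' {a}).Finite) (hdeg : ∀ a, ∑ x ∈ (hfiber a).toFinset, i x = d) :
    Surjective f := by
  intro a
  by_contra! h
  have hempty : (hfiber a).toFinset = ∅ := by
    simpa [Set.eq_empty_iff_forall_notMem] using h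
  have := hdeg a
  rw [hempty, Finset.sum_empty] at this
  omega

theorem preimage_iterate_succ (s : Set α) (k : ℕ) :
    f^[k + 1] ⁻¹' s = f ⁻¹' (f^[k] ⁻¹' s) := by
  rw [iterate_succ, preimage_comp]

theorem finite_preimage_iterate (hfiber : ∀ a, (f ⁻¹' {a}).Finite) {s : Set α} (hs : s.Finite)
    (k : ℕ) : (f^[k] ⁻¹' s).Finite := by
  induction k with
  | zero => exact hs
  | succ k ih => rw [preimage_iterate_succ]; exact ih.preimage' fun b _ => hfiber b

theorem ncard_le_ncard_preimage (hf : Surjective f) {s : Set α} (hs : (f ⁻¹' s).Finite) :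
    s.ncard ≤ (f ⁻¹' s).ncard := by
  calc s.ncard = (f '' (f ⁻¹' s)).ncard := by rw [image_preimage_eq s hf]
    _ ≤ (f ⁻¹' s).ncard := ncard_image_le hs

theorem monotone_ncard_preimage_iterate (hf : Surjective f) {s : Set α}
    (hfin : ∀ k, (f^[k] ⁻¹' s).Finite) : Monotone fun k => (f^[k] ⁻¹' s).ncard :=
  monotone_nat_of_le_succ fun k => by
    have hk := hfin (k + 1)
    rw [preimage_iterate_succ] at hk ⊢
    exact ncard_le_ncard_preimage hf hk

theorem preimage_singleton_eq_of_ncard_preimage_le (hf : Surjective f) {s : Set α}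
    (hfin : (f ⁻¹' s).Finite) (hle : (f ⁻¹' s).ncard ≤ s.ncard) {x : α} (hx : f x ∈ s) :
    f ⁻¹' {f x} = {x} := by
  have hinj : InjOn f (f ⁻¹' s) := by
    refine injOn_of_ncard_image_eq ?_ hfin
    rw [image_preimage_eq s hf]
    exact le_antisymm (ncard_le_ncard_preimage hf hfin) hle
  refine Subset.antisymm (fun y hy => ?_) (by simp)
  have hy : f y = f x := hy
  exact hinj (show f y ∈ s by rwa [hy]) hx hy

theorem Function.finite_range_iterate_of_iterate_eq {x : α} {j l : ℕ} (hjl : j < l)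
    (h : f^[j] x = f^[l] x) : (range fun k => f^[k] x).Finite := by
  refine ((Finset.range l).finite_toSet.image fun k => f^[k] x).subset ?_
  rintro _ ⟨k, rfl⟩
  induction k with
  | zero => exact ⟨0, by simp; omega, rfl⟩
  | succ k ih =>
    obtain ⟨m, hm, hmk⟩ := ih
    simp only [Finset.coe_range, mem_Iio] at hm hmk
    show f^[k + 1] x ∈ _
    rw [iterate_succ_apply', ← hmk, ← iterate_succ_apply' f]
    rcases (Nat.succ_le_of_lt hm).lt_or_eq with hlt | heq
    · exact ⟨m + 1, by simpa using hlt, rfl⟩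
    · exact ⟨j, by simpa using hjl, by simp only [h, heq]⟩

theorem finite_iUnion_preimage_iterate_of_eq {s : Set α} (hfin : ∀ k, (f^[k] ⁻¹' s).Finite)
    {j l : ℕ} (hjl : j < l) (h : f^[j] ⁻¹' s = f^[l] ⁻¹' s) : (⋃ k, f^[k] ⁻¹' s).Finite := by
  simp only [preimage_iterate_eq] at hfin h ⊢
  rw [← sUnion_range]
  exact (finite_range_iterate_of_iterate_eq hjl h).sUnion (by rintro _ ⟨k, rfl⟩; exact hfin k)

end Preimages

theorem ncard_setOf_eq_le_two {α : Type*} {i : α → ℕ} {d : ℕ} (hd : 2 ≤ d)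
    (hB : {x | 2 ≤ i x}.Finite) (hRH : ∑ x ∈ hB.toFinset, (i x - 1) = 2 * d - 2) :
    {x | i x = d}.ncard ≤ 2 := by
  have hM : {x | i x = d}.Finite := hB.subset fun x (hx : i x = d) => show 2 ≤ i x by omega
  have hsub : hM.toFinset ⊆ hB.toFinset := by
    intro x
    simp only [Finite.mem_toFinset, mem_ofPred_eq]
    omega
  have hsum : hM.toFinset.card * (d - 1) ≤ 2 * (d - 1) := by
    calc hM.toFinset.card * (d - 1) = ∑ x ∈ hM.toFinset, (i x - 1) := by
          rw [Finset.sum_congr rfl fun x hx => by rw [(Finite.mem_toFinset hM).1 hx],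
            Finset.sum_const, smul_eq_mul]
      _ ≤ ∑ x ∈ hB.toFinset, (i x - 1) := Finset.sum_le_sum_of_subset hsub
      _ = 2 * (d - 1) := by omega
  rw [ncard_eq_toFinset_card _ hM]
  exact Nat.le_of_mul_le_mul_right hsum (by omega)

theorem exists_eq_add_of_monotone {n : ℕ → ℕ} (hn : Monotone n) {m : ℕ}
    (h : n (2 * m) ≤ n 0 + 1) : ∃ a ≤ m, n a = n (a + m) := by
  have h0 := hn (Nat.zero_le m)
  have h1 := hn (show m ≤ 2 * m by omega)
  by_cases hm : n m = n 0
  · exact ⟨0, by omega, by simpa using hm.symm⟩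
  · exact ⟨m, le_rfl, by rw [show m + m = 2 * m by omega]; omega⟩

/-- A set with at most two elements has at most two subsets of any given size. -/
theorem exists_lt_eq_of_subset_of_ncard_eq {α : Type*} {M : Set α} (hM : M.Finite)
    (hM2 : M.ncard ≤ 2) {A : ℕ → Set α} {c : ℕ} (hA : ∀ j < 3, A j ⊆ M ∧ (A j).ncard = c) :
    ∃ j l, j < l ∧ A j = A l := by
  classical
  set t : Finset (Set α) := (hM.toFinset.powersetCard c).image (↑)
  have hcard : t.card < (Finset.range 3).card := by
    refine Finset.card_image_le.trans_lt ?_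
    rw [Finset.card_powersetCard, Finset.card_range, ← ncard_eq_toFinset_card _ hM]
    have := Nat.choose_le_middle c M.ncard
    interval_cases M.ncard <;> simp_all <;> omega
  have hmaps : ∀ j ∈ Finset.range 3, A j ∈ t := by
    intro j hj
    obtain ⟨hsub, hc⟩ := hA j (Finset.mem_range.1 hj)
    have hfin := hM.subset hsub
    refine Finset.mem_image.2 ⟨hfin.toFinset, Finset.mem_powersetCard.2 ⟨?_, ?_⟩, hfin.coe_toFinset⟩
    · exact Finite.toFinset_subset_toFinset.2 hsub
    · rwa [← ncard_eq_toFinset_card _ hfin]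
  obtain ⟨j, -, l, -, hne, heq⟩ := Finset.exists_ne_map_eq_of_card_lt_of_maps_to hcard hmaps
  rcases hne.lt_or_gt with hlt | hlt
  · exact ⟨j, l, hlt, heq⟩
  · exact ⟨l, j, hlt, heq.symm⟩

theorem stmt3_general (f : OnePoint ℂ → OnePoint ℂ)
    (d : ℕ) (hd : 2 ≤ d)
    (i : OnePoint ℂ → ℕ)
    (hBfin : {x | 2 ≤ i x}.Finite)
    (hRH : ∑ x ∈ hBfin.toFinset, (i x - 1) = 2 * d - 2)
    (hfiber : ∀ a, (f ⁻¹' {a}).Finite)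
    (hdeg : ∀ a, ∑ x ∈ (hfiber a).toFinset, i x = d)
    (hmax : ∀ a b, f ⁻¹' {a} = {b} → i b = d)
    (z : OnePoint ℂ)
    (hz : ¬ (⋃ k, f^[k] ⁻¹' {z}).Finite) :
    3 ≤ (f^[6] ⁻¹' {z}).ncard := by
  by_contra! hsmall
  set n : ℕ → ℕ := fun k => (f^[k] ⁻¹' {z}).ncard
  have hsurj := surjective_of_sum_fiber_eq (by omega) hfiber hdeg
  have hfin := finite_preimage_iterate hfiber (finite_singleton z)
  have hmono : Monotone n := monotone_ncard_preimage_iterate hsurj hfin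
  have h0 : n 0 = 1 := by simp [n]
  change n 6 < 3 at hsmall
  obtain ⟨a, -, ha⟩ :=
    exists_eq_add_of_monotone hmono (m := 3) (by simp only [Nat.reduceMul]; omega)
  have hconst : ∀ j ≤ 3, n (a + j) = n a := fun j hj =>
    le_antisymm ((hmono (by omega : a + j ≤ a + 3)).trans ha.ge) (hmono (by omega))
  have hmaximal : ∀ j < 3, f^[a + j + 1] ⁻¹' {z} ⊆ {x | i x = d} ∧ n (a + j + 1) = n a := by
    intro j hj
    have hsteady : n (a + j + 1) ≤ n (a + j) :=
      ((hconst (j + 1) (by omega)).trans (hconst j (by omega)).symm).le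
    refine ⟨fun x hx => hmax (f x) x ?_, hconst (j + 1) (by omega)⟩
    simp only [n, preimage_iterate_succ] at hsteady hx
    exact preimage_singleton_eq_of_ncard_preimage_le hsurj
      (by rw [← preimage_iterate_succ]; exact hfin _) hsteady hx
  obtain ⟨j, l, hjl, heq⟩ := exists_lt_eq_of_subset_of_ncard_eq
    (hBfin.subset fun x (hx : i x = d) => show 2 ≤ i x by omega)
    (ncard_setOf_eq_le_two hd hBfin hRH) hmaximal
  exact hz (finite_iUnion_preimage_iterate_of_eq hfin (by omega : a + j + 1 < a + l + 1) heq)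

/-- Let `f` be a (quasiregular) degree-`d ≥ 2` self-map of the Riemann sphere `S² = ℂ ∪ {∞}`,
with local index function `i`, finitely many critical points whose multiplicities sum to
`2d−2` (Riemann–Hurwitz), every fiber finite with indices summing to `d`, and such that a
point with a single preimage has that preimage of maximal local index `d`. If `z` is not in
the exceptional set (its backward orbit is infinite), then `f^{-6}(z)` has at least 3 points. -/
theorem stmt3 (f : OnePoint ℂ → OnePoint ℂ) (hf : Continuous f)
    (d : ℕ) (hd : 2 ≤ d)
    (i : OnePoint ℂ → ℕ)
    (hi1 : ∀ x, 1 ≤ i x)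
    (hBfin : {x | 2 ≤ i x}.Finite)
    (hRH : ∑ x ∈ hBfin.toFinset, (i x - 1) = 2 * d - 2)
    (hfiber : ∀ a, (f ⁻¹' {a}).Finite)
    (hdeg : ∀ a, ∑ x ∈ (hfiber a).toFinset, i x = d)
    (hmax : ∀ a b, f ⁻¹' {a} = {b} → i b = d)
    (z : OnePoint ℂ)
    (hz : ¬ (⋃ k, f^[k] ⁻¹' {z}).Finite) :
    3 ≤ (f^[6] ⁻¹' {z}).ncard :=
  stmt3_general f d hd i hBfin hRH hfiber hdeg hmax z hz
end

section
/- Let f: S² → S² be a quasiregular map. Then there exists η > 0 such that for every simply connected domain U ⊂ S² with chordal diameter less than η, every connected component of f^{−1}(U) is simply connected. -/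
/-!
A component `V` of `f⁻¹(U)` is small when `U` is: `f` has finite fibres, so a preconnected set
mapped into a small ball around `y` stays in one small neighbourhood of a point of `f⁻¹{y}`.
If `Vᶜ` split into two clopen pieces, one of them, `A`, would miss the connected spherical cap
`{z | r ≤ dist z x₀}` and so lie in `ball x₀ r`. As `f` is open, `f(V ∪ A)` is open and meets
`Uᶜ` only in the closed set `f(A)`, which is nonempty because `A` is not clopen in `S²`; hence
the connected set `Uᶜ` lies in `f(A)`. But `Uᶜ` contains the antipode of `f x₀`, while `f(A)`
stays near `f x₀` by uniform continuity.
-/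

open Metric Set RealInnerProductSpace

section Topology

variable {X Y : Type*} [TopologicalSpace X] [TopologicalSpace Y]

theorem IsOpen.diff_connectedComponentIn [LocallyConnectedSpace X] {W : Set X} (hW : IsOpen W)
    (x : X) : IsOpen (W \ connectedComponentIn W x) := by
  rw [isOpen_iff_mem_nhds]
  rintro z ⟨hzW, hzV⟩
  refine Filter.mem_of_superset (connectedComponentIn_mem_nhds (hW.mem_nhds hzW))
    fun w hw => ⟨connectedComponentIn_subset W z hw, fun hwV => hzV ?_⟩
  rw [connectedComponentIn_eq hwV, ← connectedComponentIn_eq hw]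
  exact mem_connectedComponentIn hzW

theorem IsClosed.isPreconnected_of_forall_inter_nonempty {s C : Set X} (hs : IsClosed s)
    (hC : IsPreconnected C) (hCs : C ⊆ s)
    (h : ∀ A ⊆ s, IsClosed A → IsClosed (s \ A) → A.Nonempty → (A ∩ C).Nonempty) :
    IsPreconnected s := by
  rw [isPreconnected_closed_iff]
  intro t t' ht ht' hcover hst hst'
  by_contra hdisj
  wlog hCt : C ⊆ t generalizing t t'
  · have hCt' : C ⊆ t' :=
      ((isPreconnected_iff_subset_of_disjoint_closed.1 hC) t t' ht ht' (hCs.trans hcover)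
        (subset_empty_iff.1 fun z hz => hdisj ⟨z, hCs hz.1, hz.2⟩)).resolve_left hCt
    exact this t' t ht' ht (union_comm t t' ▸ hcover) hst' hst (by rwa [inter_comm t']) hCt'
  have hdiff : s \ (s ∩ t') = s ∩ t := by
    ext z
    refine ⟨fun ⟨hzs, hz⟩ => ⟨hzs, ?_⟩, fun ⟨hzs, hzt⟩ => ⟨hzs, fun ⟨_, hzt'⟩ => hdisj ?_⟩⟩
    · exact (hcover hzs).resolve_right fun hzt' => hz ⟨hzs, hzt'⟩
    · exact ⟨z, hzs, hzt, hzt'⟩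
  obtain ⟨z, ⟨hzs, hzt'⟩, hzC⟩ :=
    h (s ∩ t') inter_subset_left (hs.inter ht') (hdiff ▸ hs.inter ht) hst'
  exact hdisj ⟨z, hzs, hCt hzC, hzt'⟩

theorem compl_subset_image_of_isClosed_of_isClosed_compl_diff [CompactSpace X] [ConnectedSpace X]
    [LocallyConnectedSpace X] [T2Space Y] {f : X → Y} (hf : Continuous f) (hfo : IsOpenMap f)
    {U : Set Y} (hU : IsOpen U) (hUc : IsPreconnected Uᶜ) {x₀ : X} (hx₀ : f x₀ ∈ U) {A : Set X}
    (hAV : A ⊆ (connectedComponentIn (f ⁻¹' U) x₀)ᶜ) (hA : IsClosed A)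
    (hA' : IsClosed ((connectedComponentIn (f ⁻¹' U) x₀)ᶜ \ A)) (hAne : A.Nonempty) :
    Uᶜ ⊆ f '' A := by
  set V := connectedComponentIn (f ⁻¹' U) x₀
  have hVA : IsOpen (V ∪ A) := by
    simpa only [sdiff_eq, ← compl_union, compl_compl] using hA'.isOpen_compl
  have hfV : V ⊆ f ⁻¹' U := connectedComponentIn_subset _ _
  have hA_not_in : ∃ a ∈ A, f a ∉ U := by
    by_contra! hAU
    have hA_eq : A = (V ∪ A) ∩ (f ⁻¹' U \ V) :=
      (subset_inter subset_union_right fun a ha =>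
        show a ∈ f ⁻¹' U \ V from ⟨hAU a ha, hAV ha⟩).antisymm
          fun z ⟨hz, _, hzV⟩ => hz.resolve_left hzV
    have hAo : IsOpen A := hA_eq ▸ hVA.inter ((hU.preimage hf).diff_connectedComponentIn x₀)
    rcases isClopen_iff.1 ⟨hA, hAo⟩ with rfl | hAuniv
    · exact not_nonempty_empty hAne
    · exact hAV (hAuniv ▸ mem_univ x₀) (mem_connectedComponentIn hx₀)
  obtain ⟨a, ha, hfa⟩ := hA_not_in
  have hfL : f '' A ⊆ f '' (V ∪ A) := image_mono subset_union_right
  have hcover : Uᶜ ⊆ f '' A ∪ (Uᶜ \ f '' (V ∪ A)) := by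
    intro w hw
    by_cases hwL : w ∈ f '' (V ∪ A)
    · obtain ⟨z, hz | hz, rfl⟩ := hwL
      · exact absurd (hfV hz) hw
      · exact Or.inl (mem_image_of_mem f hz)
    · exact Or.inr ⟨hw, hwL⟩
  refine (isPreconnected_iff_subset_of_disjoint_closed.1 hUc _ _ (hA.isCompact.image hf).isClosed
    (hU.isClosed_compl.sdiff (hfo _ hVA)) hcover
    (subset_empty_iff.1 fun w ⟨_, hwA, _, hwL⟩ => hwL (hfL hwA))).resolve_right fun h => ?_
  exact (h hfa).2 (hfL (mem_image_of_mem f ha))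

end Topology

section FiniteFibres

variable {X Y : Type*} [MetricSpace X] [CompactSpace X] [MetricSpace Y] {f : X → Y}

theorem exists_pos_forall_isPreconnected_subset_preimage_ball_of_finite_fibre (hf : Continuous f)
    (y : Y) (hy : (f ⁻¹' {y}).Finite) {ρ : ℝ} (hρ : 0 < ρ) :
    ∃ δ > 0, ∀ C, IsPreconnected C → C ⊆ f ⁻¹' ball y δ → ∀ p ∈ C, C ⊆ ball p ρ := by
  set F := f ⁻¹' {y}
  obtain ⟨W, hW, hWdisj⟩ := hy.t2_separation
  set N : X → Set X := fun x => W x ∩ ball x (ρ / 2)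
  have hN : ∀ x, IsOpen (N x) := fun x => (hW x).2.inter isOpen_ball
  have hy_notMem : y ∉ f '' (⋃ x ∈ F, N x)ᶜ := by
    rintro ⟨z, hz, hzy⟩
    exact hz (mem_biUnion hzy ⟨(hW z).1, mem_ball_self (half_pos hρ)⟩)
  obtain ⟨δ, hδ, hball⟩ := Metric.isOpen_iff.1
    ((isOpen_biUnion fun x _ => hN x).isClosed_compl.isCompact.image hf).isClosed.isOpen_compl
    y hy_notMem
  refine ⟨δ, hδ, fun C hC hCy p hp => ?_⟩
  have hCN : C ⊆ ⋃ x ∈ F, N x := fun z hz => by_contra fun hzN => hball (hCy hz) ⟨z, hzN, rfl⟩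
  obtain ⟨x, hxF, hpx⟩ := mem_iUnion₂.1 (hCN hp)
  have hsplit : C ⊆ N x ∪ ⋃ x' ∈ F \ {x}, N x' := by
    intro z hz
    obtain ⟨x', hx'F, hzx'⟩ := mem_iUnion₂.1 (hCN hz)
    by_cases hx' : x' = x
    · exact Or.inl (hx' ▸ hzx')
    · exact Or.inr (mem_iUnion₂.2 ⟨x', ⟨hx'F, hx'⟩, hzx'⟩)
  have hCx : C ⊆ N x :=
    hC.subset_left_of_subset_union (hN x) (isOpen_biUnion fun x' _ => hN x')
      (disjoint_iUnion₂_right.2 fun x' hx' => (hWdisj hxF hx'.1 (Ne.symm hx'.2)).mono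
        inter_subset_left inter_subset_left) hsplit ⟨p, hp, hpx⟩
  intro z hz
  calc dist z p ≤ dist z x + dist p x := dist_triangle_right z p x
    _ < ρ / 2 + ρ / 2 := add_lt_add (hCx hz).2 (hCx hp).2
    _ = ρ := add_halves ρ

theorem exists_pos_forall_isPreconnected_subset_preimage_ball (hf : Continuous f)
    (hfin : ∀ y, (f ⁻¹' {y}).Finite) {ρ : ℝ} (hρ : 0 < ρ) :
    ∃ η > 0, ∀ y C, IsPreconnected C → C ⊆ f ⁻¹' ball y η → ∀ p ∈ C, C ⊆ ball p ρ := by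
  choose δ hδ hsmall using fun y =>
    exists_pos_forall_isPreconnected_subset_preimage_ball_of_finite_fibre hf y (hfin y) hρ
  obtain ⟨ε, hε, hleb⟩ := lebesgue_number_lemma_of_metric (isCompact_range hf)
    (fun y => isOpen_ball) fun y _ => mem_iUnion.2 ⟨y, mem_ball_self (hδ y)⟩
  refine ⟨ε / 2, half_pos hε, fun y C hC hCy p hp => ?_⟩
  obtain ⟨t, ht⟩ := hleb (f p) (mem_range_self p)
  refine hsmall t C hC (fun z hz => ht ?_) p hp
  calc dist (f z) (f p) ≤ dist (f z) y + dist (f p) y := dist_triangle_right _ _ _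
    _ < ε / 2 + ε / 2 := add_lt_add (hCy hz) (hCy hp)
    _ = ε := add_halves ε

end FiniteFibres

section Sphere

variable {E : Type*} [NormedAddCommGroup E] [InnerProductSpace ℝ E]

theorem sphere_dist_sq (z w : sphere (0 : E) 1) : dist z w ^ 2 = 2 - 2 * ⟪(z : E), w⟫ := by
  rw [Subtype.dist_eq, dist_eq_norm, norm_sub_sq_real, norm_eq_of_mem_sphere,
    norm_eq_of_mem_sphere]
  ring

theorem sphere_dist_sq_add_dist_neg_sq (z x : sphere (0 : E) 1) :
    dist z x ^ 2 + dist z (-x) ^ 2 = 4 := by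
  rw [sphere_dist_sq, sphere_dist_sq, coe_neg_sphere, inner_neg_right]
  ring

/-- Normalizing the segment from `w` to `p` gives an arc along which the distance to `p`
does not increase. -/
theorem sphere_joinedIn_closedBall {w p : sphere (0 : E) 1} (hwp : dist w p < 2) :
    JoinedIn (closedBall p (dist w p)) w p := by
  set a := ⟪(w : E), p⟫
  have ha : -1 < a := by nlinarith [sphere_dist_sq w p, dist_nonneg (x := w) (y := p)]
  have ha1 : a ≤ 1 := by
    simpa [norm_eq_of_mem_sphere] using real_inner_le_norm (w : E) p
  set g : ℝ → E := fun t => (1 - t) • (w : E) + t • (p : E)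
  have hgw : ∀ t, ⟪g t, w⟫ = 1 - t + t * a := fun t => by
    simp only [g, inner_add_left, real_inner_smul_left, real_inner_self_eq_norm_sq,
      norm_eq_of_mem_sphere, real_inner_comm (w : E) p]
    ring
  have hgp : ∀ t, ⟪g t, p⟫ = (1 - t) * a + t := fun t => by
    simp only [g, inner_add_left, real_inner_smul_left, real_inner_self_eq_norm_sq,
      norm_eq_of_mem_sphere, a]
    ring
  have hg0 : ∀ t, g t ≠ 0 := fun t h => by
    have h1 := hgw t
    have h2 := hgp t
    rw [h, inner_zero_left] at h1 h2
    nlinarith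
  have hgI : ∀ t ∈ unitInterval, ‖g t‖ ≤ 1 := fun t ⟨ht0, ht1⟩ => by
    calc ‖g t‖ ≤ ‖(1 - t) • (w : E)‖ + ‖t • (p : E)‖ := norm_add_le _ _
      _ = 1 := by
        rw [norm_smul, norm_smul, norm_eq_of_mem_sphere, norm_eq_of_mem_sphere,
          Real.norm_of_nonneg (sub_nonneg.2 ht1), Real.norm_of_nonneg ht0]
        ring
  have hgw_le : ∀ t, 1 - t + t * a ≤ ‖g t‖ := fun t => by
    simpa [hgw, norm_eq_of_mem_sphere] using real_inner_le_norm (g t) w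
  have hmem : ∀ t, ‖g t‖⁻¹ • g t ∈ sphere (0 : E) 1 := fun t => by
    rw [mem_sphere_zero_iff_norm, norm_smul, norm_inv, norm_norm,
      inv_mul_cancel₀ (norm_ne_zero_iff.2 (hg0 t))]
  refine JoinedIn.ofLine (f := fun t => ⟨‖g t‖⁻¹ • g t, hmem t⟩) ?_ ?_ ?_ ?_
  · exact (Continuous.subtype_mk ((by fun_prop : Continuous g).norm.inv₀
      (fun t => norm_ne_zero_iff.2 (hg0 t)) |>.smul (by fun_prop)) hmem).continuousOn
  · ext1; simp [g, norm_eq_of_mem_sphere]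
  · ext1; simp [g, norm_eq_of_mem_sphere]
  rintro _ ⟨t, ht, rfl⟩
  have hgt := norm_pos_iff.2 (hg0 t)
  have hkey : a * ‖g t‖ ≤ (1 - t) * a + t := by
    rcases le_total 0 a with ha0 | ha0
    · nlinarith [mul_le_mul_of_nonneg_left (hgI t ht) ha0, ht.1]
    · nlinarith [mul_le_mul_of_nonpos_left (hgw_le t) ha0,
        mul_nonneg ht.1 (by nlinarith : 0 ≤ 1 - a ^ 2)]
  rw [mem_closedBall, ← pow_le_pow_iff_left₀ dist_nonneg dist_nonneg two_ne_zero, sphere_dist_sq,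
    sphere_dist_sq]
  simp only [real_inner_smul_left, hgp]
  rw [inv_mul_eq_div]
  linarith [(le_div_iff₀ hgt).2 hkey]

theorem sphere_isPathConnected_closedBall (p : sphere (0 : E) 1) {R : ℝ} (hR0 : 0 ≤ R)
    (hR : R < 2) : IsPathConnected (closedBall p R) :=
  ⟨p, mem_closedBall_self hR0, fun {_} hw =>
    ((sphere_joinedIn_closedBall (lt_of_le_of_lt hw hR)).mono
      (closedBall_subset_closedBall hw)).symm⟩

theorem sphere_isPathConnected_setOf_le_dist (x : sphere (0 : E) 1) {r : ℝ} (hr0 : 0 < r)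
    (hr2 : r ≤ 2) : IsPathConnected {z | r ≤ dist z x} := by
  have hr4 : 0 ≤ 4 - r ^ 2 := by nlinarith
  have hcap : {z | r ≤ dist z x} = closedBall (-x) √(4 - r ^ 2) := by
    ext z
    rw [mem_ofPred_eq, mem_closedBall, Real.le_sqrt dist_nonneg hr4,
      ← pow_le_pow_iff_left₀ hr0.le dist_nonneg two_ne_zero]
    constructor <;> intro h <;> linarith [sphere_dist_sq_add_dist_neg_sq z x]
  rw [hcap]
  exact sphere_isPathConnected_closedBall (-x) (Real.sqrt_nonneg _)
    ((Real.sqrt_lt' two_pos).2 (by nlinarith))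

theorem sphere_dist_neg_self (x : sphere (0 : E) 1) : dist (-x) x = 2 := by
  have h := sphere_dist_sq_add_dist_neg_sq (-x) x
  rw [dist_self] at h
  nlinarith [dist_nonneg (x := -x) (y := x)]

end Sphere

instance EuclideanSpace.connectedSpace_sphere (n : ℕ) :
    ConnectedSpace (sphere (0 : EuclideanSpace ℝ (Fin (n + 2))) 1) :=
  Subtype.connectedSpace <| isConnected_sphere
    (by simp only [← Module.finrank_eq_rank, finrank_euclideanSpace_fin]; norm_cast; omega)
    0 zero_le_one

instance EuclideanSpace.locallyConnectedSpace_sphere (n : ℕ) :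
    LocallyConnectedSpace (sphere (0 : EuclideanSpace ℝ (Fin (n + 1))) 1) :=
  ChartedSpace.locallyConnectedSpace (EuclideanSpace ℝ (Fin n)) _

theorem stmt4_general
    (f : (Metric.sphere (0 : EuclideanSpace ℝ (Fin 3)) 1) →
         (Metric.sphere (0 : EuclideanSpace ℝ (Fin 3)) 1))
    (hf : Continuous f) (hopen : IsOpenMap f)
    (hdisc : ∀ y, (f ⁻¹' {y}).Finite) :
    ∃ η > (0 : ℝ), ∀ U : Set (Metric.sphere (0 : EuclideanSpace ℝ (Fin 3)) 1),
      IsOpen U → IsConnected U → IsConnected Uᶜ → Metric.diam U < η →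
      ∀ x ∈ f ⁻¹' U, IsConnected (connectedComponentIn (f ⁻¹' U) x)ᶜ := by
  obtain ⟨δ, hδ, hfδ⟩ := Metric.uniformContinuous_iff.1
    (CompactSpace.uniformContinuous_of_continuous hf) 1 one_pos
  set r := min δ 2
  have hr : 0 < r := lt_min hδ two_pos
  obtain ⟨η, hη, hsmall⟩ := exists_pos_forall_isPreconnected_subset_preimage_ball hf hdisc hr
  refine ⟨min η 2, lt_min hη two_pos, fun U hU _ hUc hdiam x₀ hx₀ => ?_⟩
  have hU_ball : U ⊆ ball (f x₀) (min η 2) := fun w hw =>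
    (dist_le_diam_of_mem isBounded_of_compactSpace hw hx₀).trans_lt hdiam
  set V := connectedComponentIn (f ⁻¹' U) x₀
  have hV : V ⊆ ball x₀ r := hsmall (f x₀) V isPreconnected_connectedComponentIn
    ((connectedComponentIn_subset _ _).trans (preimage_mono (hU_ball.trans
      (ball_subset_ball (min_le_left _ _))))) x₀ (mem_connectedComponentIn hx₀)
  set C := {z | r ≤ dist z x₀}
  have hC := (sphere_isPathConnected_setOf_le_dist x₀ hr (min_le_right _ _)).isConnected
  have hCV : C ⊆ Vᶜ := fun z hz hzV => (mem_ball.1 (hV hzV)).not_ge hz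
  refine ⟨hC.nonempty.mono hCV, (hU.preimage hf).connectedComponentIn.isClosed_compl
    |>.isPreconnected_of_forall_inter_nonempty hC.isPreconnected hCV ?_⟩
  intro A hAV hA hA' hAne
  by_contra hAC
  have hA_ball : A ⊆ ball x₀ r := fun z hz =>
    mem_ball.2 (not_le.1 fun hzC => hAC ⟨z, hz, hzC⟩)
  have hanti : -f x₀ ∉ U := fun h => by
    have := hU_ball h
    rw [mem_ball, sphere_dist_neg_self] at this
    exact this.not_ge (min_le_right _ _)
  obtain ⟨a, ha, hfa⟩ := compl_subset_image_of_isClosed_of_isClosed_compl_diff hf hopen hU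
    hUc.isPreconnected hx₀ hAV hA hA' hAne hanti
  have := hfδ ((hA_ball ha).trans_le (min_le_left _ _))
  rw [hfa, sphere_dist_neg_self] at this
  norm_num at this

/-- For a non-constant quasiregular self-map of the sphere `S²` (a continuous, open map with
discrete fibers), there is `η > 0` such that the preimage components of every simply connected
domain `U` of chordal diameter `< η` are simply connected ("simply connected" meaning the
complement in `S²` is connected). Here `S²` carries the chordal metric, i.e. the Euclidean
metric of `ℝ³` restricted to the unit sphere. -/
theorem stmt4
    (f : (Metric.sphere (0 : EuclideanSpace ℝ (Fin 3)) 1) →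
         (Metric.sphere (0 : EuclideanSpace ℝ (Fin 3)) 1))
    (hf : Continuous f) (hopen : IsOpenMap f)
    (hdisc : ∀ y, (f ⁻¹' {y}).Finite)
    (hnc : ¬ ∃ c, ∀ x, f x = c) :
    ∃ η > (0 : ℝ), ∀ U : Set (Metric.sphere (0 : EuclideanSpace ℝ (Fin 3)) 1),
      IsOpen U → IsConnected U → IsConnected Uᶜ → Metric.diam U < η →
      ∀ x ∈ f ⁻¹' U, IsConnected (connectedComponentIn (f ⁻¹' U) x)ᶜ :=
  stmt4_general f hf hopen hdisc
end

section
/- Let 0 < δ < 1/14, λ = 2e/δ, and f(z) = λ((z−1)²·|z−1|/δ + 2(z−1) − (z−1)²) for δ ≤ |z−1| ≤ 2δ. Then |f(z)| ≥ λ·|z−1|·(2 − |z−1| − |z−1|²/δ) ≥ 2e(2 − 6δ) ≥ 4 for all z in the annulus δ ≤ |z−1| ≤ 2δ. -/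
/-! Write `u = z - 1` and `r = |u|`. By the triangle inequality the term `2u` dominates:
`|f(z)| ≥ λ (2r - r² - r³/δ)`. On the annulus `λ r ≥ 2e` and `r + r²/δ ≤ 6δ`, and `δ < 1/14`
makes `2e(2 - 6δ)` comfortably larger than `4`. -/

lemma norm_sq_mul_add_two_mul_sub_sq_ge (u c : ℂ) :
    2 * ‖u‖ - ‖u‖ ^ 2 - ‖u‖ ^ 2 * ‖c‖ ≤ ‖u ^ 2 * c + 2 * u - u ^ 2‖ := by
  set e := u ^ 2 * c + 2 * u - u ^ 2
  have : ‖2 * u‖ ≤ ‖e‖ + ‖u ^ 2‖ + ‖u ^ 2 * c‖ :=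
    calc ‖2 * u‖ = ‖e + u ^ 2 - u ^ 2 * c‖ := by congr 1; ring
      _ ≤ ‖e‖ + ‖u ^ 2‖ + ‖u ^ 2 * c‖ :=
        (norm_sub_le _ _).trans (by gcongr; exact norm_add_le _ _)
  simp only [norm_mul, norm_pow, Complex.norm_two] at this
  linarith

lemma norm_interpolation_ge (u : ℂ) {δ : ℝ} (hδ : 0 ≤ δ) :
    ‖u‖ * (2 - ‖u‖ - ‖u‖ ^ 2 / δ) ≤ ‖u ^ 2 * ((‖u‖ : ℝ) : ℂ) / (δ : ℂ) + 2 * u - u ^ 2‖ := by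
  have h := norm_sq_mul_add_two_mul_sub_sq_ge u ((‖u‖ / δ : ℝ) : ℂ)
  rw [Complex.norm_real, Real.norm_of_nonneg (by positivity)] at h
  push_cast at h
  rw [mul_div_assoc]
  calc ‖u‖ * (2 - ‖u‖ - ‖u‖ ^ 2 / δ) = 2 * ‖u‖ - ‖u‖ ^ 2 - ‖u‖ ^ 2 * (‖u‖ / δ) := by ring
    _ ≤ _ := h

lemma mul_sub_le_div_mul_mul_sub {a δ r : ℝ} (ha : 0 ≤ a) (hδ : 0 < δ) (hδ3 : δ ≤ 1 / 3)
    (h1 : δ ≤ r) (h2 : r ≤ 2 * δ) :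
    a * (2 - 6 * δ) ≤ a / δ * r * (2 - r - r ^ 2 / δ) := by
  have hscale : a ≤ a / δ * r := by
    rw [div_mul_eq_mul_div, le_div_iff₀ hδ]
    exact mul_le_mul_of_nonneg_left h1 ha
  have hquad : r ^ 2 / δ ≤ 4 * δ := by
    rw [div_le_iff₀ hδ]
    nlinarith
  exact mul_le_mul hscale (by linarith) (by linarith) (ha.trans hscale)

lemma four_le_two_mul_exp_one_mul {δ : ℝ} (hδ : δ < 1 / 14) :
    4 ≤ 2 * Real.exp 1 * (2 - 6 * δ) := by
  have he := Real.exp_one_gt_d9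
  nlinarith

/-- For `0 < δ < 1/14`, `λ = 2e/δ`, and the interpolation
`f(z) = λ((z−1)²|z−1|/δ + 2(z−1) − (z−1)²)` on the annulus `δ ≤ |z−1| ≤ 2δ`, one has
`|f(z)| ≥ λ|z−1|(2 − |z−1| − |z−1|²/δ) ≥ 2e(2−6δ) ≥ 4`. -/
theorem stmt9 (δ lam : ℝ) (hδ : 0 < δ) (hδ' : δ < 1 / 14)
    (hlam : lam = 2 * Real.exp 1 / δ)
    (z : ℂ) (h1 : δ ≤ ‖z - 1‖) (h2 : ‖z - 1‖ ≤ 2 * δ)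
    (w : ℂ)
    (hw : w = (lam : ℂ) * ((z - 1) ^ 2 * ((‖z - 1‖ : ℝ) : ℂ) / (δ : ℂ)
      + 2 * (z - 1) - (z - 1) ^ 2)) :
    lam * ‖z - 1‖ *
        (2 - ‖z - 1‖ - ‖z - 1‖ ^ 2 / δ) ≤ ‖w‖ ∧
    2 * Real.exp 1 * (2 - 6 * δ) ≤
      lam * ‖z - 1‖ *
        (2 - ‖z - 1‖ - ‖z - 1‖ ^ 2 / δ) ∧
    (4 : ℝ) ≤ 2 * Real.exp 1 * (2 - 6 * δ) := by
  have hlam0 : 0 ≤ lam := by rw [hlam]; positivity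
  refine ⟨?_, ?_, four_le_two_mul_exp_one_mul hδ'⟩
  · rw [hw, norm_mul, Complex.norm_real, Real.norm_of_nonneg hlam0, mul_assoc]
    exact mul_le_mul_of_nonneg_left (norm_interpolation_ge _ hδ.le) hlam0
  · rw [hlam]
    exact mul_sub_le_div_mul_mul_sub (by positivity) hδ (by linarith) h1 h2
end

section
/- Let K ∈ (1,2), and for n ∈ ℕ let t_{n+1} = t_0·α^{n+1}·exp(−(K^{n+1}−1)/(K−1)) with t_0 = 4e, α = δ/4, 0 < δ < 1/14. Define h(t) = (log(1/t))^{−log 2 / log K}. Then 2^n·h(2t_{n+1}/α) = (K^{−n}(−log(2t_0) − n·log α) + (K − K^{−n})/(K−1))^{−log 2/log K}, and consequently lim_{n→∞} 2^n·h(2t_{n+1}/α) = (K/(K−1))^{−log 2/log K}. -/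
/-! Writing `c = log (2 t₀)` and `a = log α`, one has `log (α / (2 t_{n+1})) = L_n` with
`L_n = -c - n a + (1 + K + ⋯ + Kⁿ)`, so `2ⁿ h(2 t_{n+1}/α) = 2ⁿ L_nᵉ` for `e = -log 2 / log K`.
Since `(K⁻ⁿ)ᵉ = 2ⁿ`, this is `(K⁻ⁿ L_n)ᵉ`, which is the closed form; and `K⁻ⁿ L_n → K/(K-1)`
because the geometric sum grows like `K^(n+1)/(K-1)` while `c + n a` is only linear in `n`. -/

open Filter Real Topology

lemma rpow_neg_natCast_rpow_neg_log_div_log {K b : ℝ} (hK : 0 < K) (hK1 : K ≠ 1) (hb : 0 < b)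
    (n : ℕ) : (K ^ (-(n : ℝ))) ^ (-(log b) / log K) = b ^ n := by
  rw [← rpow_mul hK.le, neg_div, neg_mul_neg, log_div_log, mul_comm, rpow_mul hK.le,
    rpow_logb hK hK1 hb, rpow_natCast]

lemma pow_mul_rpow_neg_log_div_log {K b L : ℝ} (hK : 0 < K) (hK1 : K ≠ 1) (hb : 0 < b)
    (hL : 0 ≤ L) (n : ℕ) :
    b ^ n * L ^ (-(log b) / log K) = (K ^ (-(n : ℝ)) * L) ^ (-(log b) / log K) := by
  rw [mul_rpow (by positivity) hL, rpow_neg_natCast_rpow_neg_log_div_log hK hK1 hb]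

lemma rpow_neg_natCast_mul_geom_sum {K : ℝ} (hK : 0 < K) (n : ℕ) :
    K ^ (-(n : ℝ)) * ((K ^ (n + 1) - 1) / (K - 1)) = (K - K ^ (-(n : ℝ))) / (K - 1) := by
  rw [rpow_neg hK.le, rpow_natCast, pow_succ]
  field_simp

lemma neg_sub_mul_add_geom_pos {K c a : ℝ} (hK : 1 < K) (ha : a ≤ 0) (hac : a + c < 0) {n : ℕ}
    (hn : 1 ≤ n) : 0 < -c - n * a + (K ^ (n + 1) - 1) / (K - 1) := by
  have hn' : (1 : ℝ) ≤ n := by exact_mod_cast hn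
  have hgeom : 0 < (K ^ (n + 1) - 1) / (K - 1) :=
    div_pos (sub_pos.2 (one_lt_pow₀ hK n.succ_ne_zero)) (sub_pos.2 hK)
  nlinarith

lemma tendsto_rpow_neg_natCast_mul_add_geom {K : ℝ} (hK : 1 < K) (c a : ℝ) :
    Tendsto (fun n : ℕ => K ^ (-(n : ℝ)) * (-c - n * a) + (K - K ^ (-(n : ℝ))) / (K - 1))
      atTop (𝓝 (K / (K - 1))) := by
  have hpow : ∀ n : ℕ, K ^ (-(n : ℝ)) = K⁻¹ ^ n := fun n => by
    rw [rpow_neg (by linarith), rpow_natCast, inv_pow]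
  have hinv0 : 0 ≤ K⁻¹ := by positivity
  have hinv1 : K⁻¹ < 1 := inv_lt_one_of_one_lt₀ hK
  have hgeo := tendsto_pow_atTop_nhds_zero_of_lt_one hinv0 hinv1
  have hlin := tendsto_self_mul_const_pow_of_lt_one hinv0 hinv1
  have hlim := ((hgeo.mul_const (-c)).sub (hlin.const_mul a)).add
    ((tendsto_const_nhds (x := K)).sub hgeo |>.div_const (K - 1))
  simp only [zero_mul, mul_zero, sub_zero, zero_add] at hlim
  exact hlim.congr fun n => by rw [hpow]; ring

lemma two_mul_succ_div_eq_exp {K t0 α : ℝ} (ht0 : 0 < t0) (hα : 0 < α) {t : ℕ → ℝ}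
    (ht : ∀ n, t n = t0 * α ^ n * exp (-(K ^ n - 1) / (K - 1))) (n : ℕ) :
    2 * t (n + 1) / α = exp (-(-log (2 * t0) - n * log α + (K ^ (n + 1) - 1) / (K - 1))) := by
  rw [ht, show -(-log (2 * t0) - n * log α + (K ^ (n + 1) - 1) / (K - 1))
      = log (2 * t0) + n * log α + -(K ^ (n + 1) - 1) / (K - 1) by ring,
    exp_add, exp_add, exp_log (by positivity), exp_nat_mul, exp_log hα, pow_succ]
  field_simp

theorem stmt11_general (K δ t0 α : ℝ) (hK1 : 1 < K)
    (hδ : 0 < δ) (hδ' : δ < 1 / 14)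
    (ht0 : t0 = 4 * Real.exp 1) (hα : α = δ / 4)
    (t : ℕ → ℝ)
    (ht : ∀ n, t n = t0 * α ^ n * Real.exp (-(K ^ n - 1) / (K - 1)))
    (h : ℝ → ℝ)
    (hh : ∀ x : ℝ, 0 < x → x < 1 →
      h x = (Real.log (1 / x)) ^ (-(Real.log 2) / Real.log K)) :
    (∀ n : ℕ, 1 ≤ n →
      2 ^ n * h (2 * t (n + 1) / α) =
        (K ^ (-(n : ℝ)) * (-(Real.log (2 * t0)) - (n : ℝ) * Real.log α)
          + (K - K ^ (-(n : ℝ))) / (K - 1)) ^ (-(Real.log 2) / Real.log K)) ∧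
    Filter.Tendsto (fun n : ℕ => 2 ^ n * h (2 * t (n + 1) / α)) Filter.atTop
      (nhds ((K / (K - 1)) ^ (-(Real.log 2) / Real.log K))) := by
  have hK0 : 0 < K := by linarith
  have ht0pos : 0 < t0 := by rw [ht0]; positivity
  have hα0 : 0 < α := by rw [hα]; linarith
  have hloga : log α ≤ 0 := log_nonpos hα0.le (by rw [hα]; linarith)
  have hsmall : log α + log (2 * t0) < 0 := by
    rw [← log_mul hα0.ne' (by positivity)]
    refine log_neg (by positivity) ?_
    rw [hα, ht0]
    nlinarith [exp_one_lt_d9]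
  have key : ∀ n : ℕ, 1 ≤ n → 2 ^ n * h (2 * t (n + 1) / α) =
      (K ^ (-(n : ℝ)) * (-(log (2 * t0)) - n * log α) + (K - K ^ (-(n : ℝ))) / (K - 1))
        ^ (-(log 2) / log K) := by
    intro n hn
    have hL := neg_sub_mul_add_geom_pos (K := K) hK1 hloga hsmall hn
    rw [two_mul_succ_div_eq_exp ht0pos hα0 ht, hh _ (exp_pos _) (exp_lt_one_iff.2 (by linarith)),
      one_div, log_inv, log_exp, neg_neg, pow_mul_rpow_neg_log_div_log hK0 hK1.ne' two_pos hL.le,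
      mul_add, rpow_neg_natCast_mul_geom_sum hK0]
  refine ⟨key, ?_⟩
  refine ((tendsto_rpow_neg_natCast_mul_add_geom hK1 (log (2 * t0)) (log α)).rpow_const
    (Or.inl (div_pos hK0 (sub_pos.2 hK1)).ne')).congr' ?_
  filter_upwards [eventually_ge_atTop 1] with n hn
  exact (key n hn).symm

/-- For `K ∈ (1,2)`, `t_0 = 4e`, `α = δ/4` with `0 < δ < 1/14`,
`t_n = t_0 α^n exp(−(K^n−1)/(K−1))` and the gauge `h(t) = (log(1/t))^{−log 2/log K}`:
`2^n h(2t_{n+1}/α) = (K^{−n}(−log(2t_0) − n log α) + (K − K^{−n})/(K−1))^{−log 2/log K}`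
(for `n ≥ 1`, where the argument of `h` lies in `(0,1)`), and consequently
`2^n h(2t_{n+1}/α) → (K/(K−1))^{−log 2/log K}` as `n → ∞`. -/
theorem stmt11 (K δ t0 α : ℝ) (hK1 : 1 < K) (hK2 : K < 2)
    (hδ : 0 < δ) (hδ' : δ < 1 / 14)
    (ht0 : t0 = 4 * Real.exp 1) (hα : α = δ / 4)
    (t : ℕ → ℝ)
    (ht : ∀ n, t n = t0 * α ^ n * Real.exp (-(K ^ n - 1) / (K - 1)))
    (h : ℝ → ℝ)
    (hh : ∀ x : ℝ, 0 < x → x < 1 →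
      h x = (Real.log (1 / x)) ^ (-(Real.log 2) / Real.log K)) :
    (∀ n : ℕ, 1 ≤ n →
      2 ^ n * h (2 * t (n + 1) / α) =
        (K ^ (-(n : ℝ)) * (-(Real.log (2 * t0)) - (n : ℝ) * Real.log α)
          + (K - K ^ (-(n : ℝ))) / (K - 1)) ^ (-(Real.log 2) / Real.log K)) ∧
    Filter.Tendsto (fun n : ℕ => 2 ^ n * h (2 * t (n + 1) / α)) Filter.atTop
      (nhds ((K / (K - 1)) ^ (-(Real.log 2) / Real.log K))) :=
  stmt11_general K δ t0 α hK1 hδ hδ' ht0 hα t ht h hh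
end

section
/- Let C ⊂ ℂ be a set such that for every n ∈ ℕ, C can be covered by 2^n balls of radius s_n, where s_n = t_0·α^n·exp(−(K^n−1)/(K−1))·exp(−K^n), with K ∈ (1,2), t_0 = 4e, α = δ/4, 0 < δ < 1/14. Then for the gauge function h(t) = (log(1/t))^{−log 2/log K}, the Hausdorff measure satisfies H_h(C) ≤ (K/(K−1))^{−log 2/log K} < ∞. In particular, C has Hausdorff dimension 0. -/
/-!
Put `L_n = -log (2 s_n) = K^(n+1)/(K-1) - 1/(K-1) - log (2 t_0) - n log α`. Since `α < 1`, the
term `-n log α` eventually dominates the constants, so `L_n ≥ K^n · K/(K-1)` for large `n`.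
The `2^n` balls have diameter at most `2 s_n → 0` and `h` is increasing near `0`, so
`H_h(C) ≤ liminf 2^n h(2 s_n)`, while `2^n h(2 s_n) ≤ 2^n (K^n · K/(K-1))^(-log 2/log K)`,
which equals `(K/(K-1))^(-log 2/log K)` because `K^(log 2/log K) = 2`.
Since `t^d ≤ h(t)` near `0` for every `d > 0`, `H^d(C) ≤ H_h(C) < ∞`, so `dim_H C ≤ d`.
-/

open MeasureTheory Filter Topology Set
open scoped ENNReal

theorem Metric.ediam_ball_le_ofReal {X : Type*} [PseudoMetricSpace X] (x : X) (r : ℝ) :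
    Metric.ediam (Metric.ball x r) ≤ ENNReal.ofReal (2 * r) := by
  rw [← Metric.eball_ofReal, ENNReal.ofReal_mul zero_le_two, ENNReal.ofReal_ofNat]
  exact Metric.ediam_eball_le

section mkMetric

variable {X : Type*} [EMetricSpace X] [MeasurableSpace X] [BorelSpace X]

theorem MeasureTheory.Measure.mkMetric_le_liminf_card_mul {ι : ℕ → Type*} [∀ n, Fintype (ι n)]
    {m : ℝ≥0∞ → ℝ≥0∞} {ε : ℝ≥0∞} (hε : 0 < ε) (hm : MonotoneOn m (Iio ε)) (s : Set X)
    (r : ℕ → ℝ≥0∞) (hr : Tendsto r atTop (𝓝 0)) (t : ∀ n, ι n → Set X)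
    (ht : ∀ᶠ n in atTop, ∀ i, Metric.ediam (t n i) ≤ r n)
    (hst : ∀ᶠ n in atTop, s ⊆ ⋃ i, t n i) :
    Measure.mkMetric m s ≤ liminf (fun n => Fintype.card (ι n) * m (r n)) atTop := by
  refine (Measure.mkMetric_le_liminf_sum s r hr t ht hst m).trans (liminf_le_liminf ?_)
  filter_upwards [ht, hr.eventually (gt_mem_nhds hε)] with n htn hrn
  calc ∑ i, m (Metric.ediam (t n i)) ≤ ∑ _i : ι n, m (r n) :=
        Finset.sum_le_sum fun i _ => hm ((htn i).trans_lt hrn) hrn (htn i)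
    _ = Fintype.card (ι n) * m (r n) := by simp [nsmul_eq_mul]

theorem dimH_eq_zero_of_mkMetric_ne_top {m : ℝ≥0∞ → ℝ≥0∞}
    (hm : ∀ d : ℝ, 0 < d → (fun x : ℝ≥0∞ => x ^ d) ≤ᶠ[𝓝 0] m) {s : Set X}
    (hs : Measure.mkMetric m s ≠ ∞) : dimH s = 0 := by
  refine le_antisymm (ENNReal.le_of_forall_pos_le_add fun d hd _ => ?_) zero_le
  rw [zero_add]
  refine dimH_le_of_hausdorffMeasure_ne_top (ne_top_of_le_ne_top hs ?_)
  exact Measure.mkMetric_mono (hm d hd) s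

end mkMetric

-- Only meaningful on `[0, 1)`: elsewhere `Real.log` and `Real.rpow` produce junk values
-- (e.g. `⊤.toReal = 0`).
noncomputable def logGauge (q : ℝ) (x : ℝ≥0∞) : ℝ≥0∞ :=
  ENNReal.ofReal (Real.log (1 / x.toReal) ^ q)

theorem logGauge_ofReal (q : ℝ) {t : ℝ} (ht : 0 ≤ t) :
    logGauge q (ENNReal.ofReal t) = ENNReal.ofReal ((-Real.log t) ^ q) := by
  rw [logGauge, ENNReal.toReal_ofReal ht, one_div, Real.log_inv]

theorem logGauge_monotoneOn {q : ℝ} (hq : q ≤ 0) : MonotoneOn (logGauge q) (Iio 1) := by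
  intro x _ y hy hxy
  have hy1 : y.toReal < 1 := ENNReal.toReal_lt_of_lt_ofReal (by simpa using hy)
  have hxy' : x.toReal ≤ y.toReal := ENNReal.toReal_mono (hy.trans ENNReal.one_lt_top).ne hxy
  refine ENNReal.ofReal_le_ofReal ?_
  simp only [one_div, Real.log_inv]
  rcases ENNReal.toReal_nonneg.eq_or_lt with hx0 | hx0
  · rcases hq.lt_or_eq with hq | rfl
    · rw [← hx0, Real.log_zero, neg_zero, Real.zero_rpow hq.ne]
      exact Real.rpow_nonneg (neg_nonneg.2 (Real.log_nonpos ENNReal.toReal_nonneg hy1.le)) q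
    · simp
  · refine Real.rpow_le_rpow_of_nonpos (neg_pos.2 (Real.log_neg (hx0.trans_le hxy') hy1)) ?_ hq
    exact neg_le_neg (Real.log_le_log hx0 hxy')

theorem rpow_eventuallyLE_logGauge {d : ℝ} (hd : 0 < d) (q : ℝ) :
    (fun x : ℝ≥0∞ => x ^ d) ≤ᶠ[𝓝 0] logGauge q := by
  have hreal : ∀ᶠ t in 𝓝[>] (0 : ℝ), t ^ d ≤ (-Real.log t) ^ q := by
    have hu : Tendsto (fun t => -Real.log t) (𝓝[>] 0) atTop :=
      tendsto_neg_atBot_atTop.comp Real.tendsto_log_nhdsGT_zero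
    filter_upwards
      [hu.eventually ((tendsto_exp_mul_div_rpow_atTop (-q) d hd).eventually_ge_atTop 1),
      hu.eventually (eventually_gt_atTop 0), self_mem_nhdsWithin]
      with t ht hpos (htpos : 0 < t)
    rw [Real.rpow_neg hpos.le, le_div_iff₀ (by positivity), one_mul] at ht
    calc t ^ d = (Real.exp (d * -Real.log t))⁻¹ := by
          rw [Real.rpow_def_of_pos htpos, ← Real.exp_neg]; ring_nf
      _ ≤ ((-Real.log t) ^ q)⁻¹⁻¹ := inv_anti₀ (by positivity) ht
      _ = (-Real.log t) ^ q := inv_inv _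
  filter_upwards [(ENNReal.tendsto_toReal ENNReal.zero_ne_top).eventually
      (eventually_nhdsWithin_iff.1 hreal),
    eventually_lt_nhds ENNReal.zero_lt_top] with x hx hxtop
  rcases eq_or_ne x 0 with rfl | hx0
  · simp [ENNReal.zero_rpow_of_pos hd]
  · have hpos : 0 < x.toReal := ENNReal.toReal_pos hx0 hxtop.ne
    rw [logGauge, one_div, Real.log_inv, ← ENNReal.ofReal_toReal hxtop.ne,
      ENNReal.ofReal_rpow_of_pos hpos, ENNReal.toReal_ofReal hpos.le]
    exact ENNReal.ofReal_le_ofReal (hx hpos)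

noncomputable def coverRadius (K t0 α : ℝ) (n : ℕ) : ℝ :=
  t0 * α ^ n * Real.exp (-(K ^ n - 1) / (K - 1)) * Real.exp (-(K ^ n))

section coverRadius

variable {K t0 α : ℝ}

theorem coverRadius_pos (ht0 : 0 < t0) (hα : 0 < α) (n : ℕ) : 0 < coverRadius K t0 α n := by
  unfold coverRadius; positivity

theorem tendsto_coverRadius (hK : 1 ≤ K) (ht0 : 0 < t0) (hα0 : 0 < α) (hα1 : α < 1) :
    Tendsto (coverRadius K t0 α) atTop (𝓝 0) := by
  have hgeom : Tendsto (fun n : ℕ => t0 * α ^ n) atTop (𝓝 0) := by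
    simpa using (tendsto_pow_atTop_nhds_zero_of_lt_one hα0.le hα1).const_mul t0
  refine squeeze_zero (fun n => (coverRadius_pos ht0 hα0 n).le) (fun n => ?_) hgeom
  have hKn : 1 ≤ K ^ n := one_le_pow₀ hK
  have h1 : Real.exp (-(K ^ n - 1) / (K - 1)) ≤ 1 :=
    Real.exp_le_one_iff.2 (div_nonpos_of_nonpos_of_nonneg (by linarith) (by linarith))
  have h2 : Real.exp (-(K ^ n)) ≤ 1 := Real.exp_le_one_iff.2 (by linarith)
  calc coverRadius K t0 α n
      = t0 * α ^ n * (Real.exp (-(K ^ n - 1) / (K - 1)) * Real.exp (-(K ^ n))) := by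
        rw [coverRadius, mul_assoc]
    _ ≤ t0 * α ^ n * 1 := by gcongr; exact mul_le_one₀ h1 (Real.exp_pos _).le h2
    _ = t0 * α ^ n := mul_one _

theorem neg_log_two_mul_coverRadius (hK : K ≠ 1) (ht0 : 0 < t0) (hα : 0 < α) (n : ℕ) :
    -Real.log (2 * coverRadius K t0 α n)
      = K ^ n * (K / (K - 1)) - (1 / (K - 1) + Real.log (2 * t0)) - n * Real.log α := by
  have hK' : K - 1 ≠ 0 := sub_ne_zero.2 hK
  rw [coverRadius, ← mul_assoc, ← mul_assoc, Real.log_mul (by positivity) (by positivity),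
    Real.log_mul (by positivity) (by positivity), Real.log_mul (by positivity) (by positivity),
    Real.log_mul (by positivity) (by positivity), Real.log_mul two_ne_zero ht0.ne',
    Real.log_pow, Real.log_exp, Real.log_exp]
  field_simp
  ring

theorem eventually_le_neg_log_two_mul_coverRadius (hK : K ≠ 1) (ht0 : 0 < t0) (hα0 : 0 < α)
    (hα1 : α < 1) :
    ∀ᶠ n : ℕ in atTop, K ^ n * (K / (K - 1)) ≤ -Real.log (2 * coverRadius K t0 α n) := by
  have hlin : Tendsto (fun n : ℕ => n * -Real.log α) atTop atTop :=
    tendsto_natCast_atTop_atTop.atTop_mul_const (neg_pos.2 (Real.log_neg hα0 hα1))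
  filter_upwards [hlin.eventually_ge_atTop (1 / (K - 1) + Real.log (2 * t0))] with n hn
  rw [neg_log_two_mul_coverRadius hK ht0 hα0]
  linarith

end coverRadius

theorem neg_log_two_div_log_nonpos {K : ℝ} (hK : 1 ≤ K) : -Real.log 2 / Real.log K ≤ 0 :=
  div_nonpos_of_nonpos_of_nonneg (neg_nonpos.2 (Real.log_nonneg one_le_two)) (Real.log_nonneg hK)

theorem two_pow_mul_rpow_neg_log_two_div_log {K : ℝ} (hK0 : 0 < K) (hK1 : K ≠ 1) {c : ℝ}
    (hc : 0 ≤ c) (n : ℕ) :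
    2 ^ n * (K ^ n * c) ^ (-Real.log 2 / Real.log K) = c ^ (-Real.log 2 / Real.log K) := by
  have hlogK : Real.log K ≠ 0 := Real.log_ne_zero_of_pos_of_ne_one hK0 hK1
  have hKn : (K ^ n) ^ (-Real.log 2 / Real.log K) = (2 ^ n)⁻¹ := by
    rw [Real.rpow_def_of_pos (by positivity), Real.log_pow, ← Real.rpow_natCast,
      ← Real.rpow_neg_one, ← Real.rpow_mul zero_le_two, Real.rpow_def_of_pos two_pos]
    congr 1
    field_simp
  rw [Real.mul_rpow (by positivity) hc, hKn, ← mul_assoc, mul_inv_cancel₀ (by positivity), one_mul]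

theorem eventually_two_pow_mul_logGauge_coverRadius_le {K t0 α : ℝ} (hK : 1 < K) (ht0 : 0 < t0)
    (hα0 : 0 < α) (hα1 : α < 1) :
    ∀ᶠ n : ℕ in atTop, ((2 ^ n : ℕ) : ℝ≥0∞) *
        logGauge (-Real.log 2 / Real.log K) (ENNReal.ofReal (2 * coverRadius K t0 α n))
      ≤ ENNReal.ofReal ((K / (K - 1)) ^ (-Real.log 2 / Real.log K)) := by
  have hK0 : 0 < K := one_pos.trans hK
  have hc : 0 < K / (K - 1) := div_pos hK0 (sub_pos.2 hK)
  filter_upwards [eventually_le_neg_log_two_mul_coverRadius hK.ne' ht0 hα0 hα1] with n hn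
  rw [logGauge_ofReal _ (mul_pos two_pos (coverRadius_pos ht0 hα0 n)).le,
    ← ENNReal.ofReal_natCast, ← ENNReal.ofReal_mul (Nat.cast_nonneg _)]
  refine ENNReal.ofReal_le_ofReal ?_
  calc ((2 ^ n : ℕ) : ℝ) * (-Real.log (2 * coverRadius K t0 α n)) ^ (-Real.log 2 / Real.log K)
      ≤ 2 ^ n * (K ^ n * (K / (K - 1))) ^ (-Real.log 2 / Real.log K) := by
        push_cast
        refine mul_le_mul_of_nonneg_left ?_ (by positivity)
        exact Real.rpow_le_rpow_of_nonpos (by positivity) hn (neg_log_two_div_log_nonpos hK.le)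
    _ = (K / (K - 1)) ^ (-Real.log 2 / Real.log K) :=
        two_pow_mul_rpow_neg_log_two_div_log hK0 hK.ne' hc.le n

theorem stmt12_general (K δ t0 α : ℝ) (hK1 : 1 < K)
    (hδ : 0 < δ) (hδ' : δ < 1 / 14)
    (ht0 : t0 = 4 * Real.exp 1) (hα : α = δ / 4)
    (s : ℕ → ℝ)
    (hs : ∀ n, s n = t0 * α ^ n * Real.exp (-(K ^ n - 1) / (K - 1)) * Real.exp (-(K ^ n)))
    (C : Set ℂ)
    (hcover : ∀ n : ℕ, ∃ c : Fin (2 ^ n) → ℂ, C ⊆ ⋃ j, Metric.ball (c j) (s n)) :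
    Measure.mkMetric
        (fun x : ENNReal =>
          ENNReal.ofReal ((Real.log (1 / x.toReal)) ^ (-(Real.log 2) / Real.log K))) C
      ≤ ENNReal.ofReal ((K / (K - 1)) ^ (-(Real.log 2) / Real.log K)) ∧
    dimH C = 0 := by
  have ht0_pos : 0 < t0 := by rw [ht0]; positivity
  have hα0 : 0 < α := by rw [hα]; positivity
  have hα1 : α < 1 := by rw [hα]; linarith
  obtain rfl : s = coverRadius K t0 α := funext hs
  choose c hc using hcover
  have hr : Tendsto (fun n => ENNReal.ofReal (2 * coverRadius K t0 α n)) atTop (𝓝 0) := by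
    simpa using ENNReal.tendsto_ofReal ((tendsto_coverRadius hK1.le ht0_pos hα0 hα1).const_mul 2)
  have hμ : Measure.mkMetric (logGauge (-Real.log 2 / Real.log K)) C
      ≤ ENNReal.ofReal ((K / (K - 1)) ^ (-Real.log 2 / Real.log K)) := by
    refine (Measure.mkMetric_le_liminf_card_mul one_pos
      (logGauge_monotoneOn (neg_log_two_div_log_nonpos hK1.le)) C _ hr
      (fun n i => Metric.ball (c n i) (coverRadius K t0 α n))
      (.of_forall fun n i => Metric.ediam_ball_le_ofReal _ _) (.of_forall hc)).trans ?_
    refine liminf_le_of_frequently_le' (Eventually.frequently ?_)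
    simpa only [Fintype.card_fin] using
      eventually_two_pow_mul_logGauge_coverRadius_le hK1 ht0_pos hα0 hα1
  exact ⟨hμ, dimH_eq_zero_of_mkMetric_ne_top (fun d hd => rpow_eventuallyLE_logGauge hd _)
    (ne_top_of_le_ne_top ENNReal.ofReal_ne_top hμ)⟩

/-- If `C ⊆ ℂ` can be covered, for every `n`, by `2^n` balls of radius
`s_n = t_0 α^n exp(−(K^n−1)/(K−1)) exp(−K^n)` (with `K ∈ (1,2)`, `t_0 = 4e`, `α = δ/4`,
`0 < δ < 1/14`), then for the gauge `h(t) = (log(1/t))^{−log 2/log K}` the Hausdorff measure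
satisfies `H_h(C) ≤ (K/(K−1))^{−log 2/log K} < ∞`; in particular `C` has Hausdorff
dimension `0`. -/
theorem stmt12 (K δ t0 α : ℝ) (hK1 : 1 < K) (hK2 : K < 2)
    (hδ : 0 < δ) (hδ' : δ < 1 / 14)
    (ht0 : t0 = 4 * Real.exp 1) (hα : α = δ / 4)
    (s : ℕ → ℝ)
    (hs : ∀ n, s n = t0 * α ^ n * Real.exp (-(K ^ n - 1) / (K - 1)) * Real.exp (-(K ^ n)))
    (C : Set ℂ)
    (hcover : ∀ n : ℕ, ∃ c : Fin (2 ^ n) → ℂ, C ⊆ ⋃ j, Metric.ball (c j) (s n)) :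
    Measure.mkMetric
        (fun x : ENNReal =>
          ENNReal.ofReal ((Real.log (1 / x.toReal)) ^ (-(Real.log 2) / Real.log K))) C
      ≤ ENNReal.ofReal ((K / (K - 1)) ^ (-(Real.log 2) / Real.log K)) ∧
    dimH C = 0 :=
  stmt12_general K δ t0 α hK1 hδ hδ' ht0 hα s hs C hcover
end

section
/- Let f(z) = λ((z−1)²|z−1|/δ + 2(z−1) − (z−1)²) for δ ≤ |z−1| ≤ 2δ where 0 < δ < 1/14 and λ > 0. Then on this annulus |∂f/∂z̄| ≤ 2λδ and |∂f/∂z| ≥ λ(2 − 14δ), so the Beltrami coefficient satisfies |∂f/∂z̄ / ∂f/∂z| ≤ δ/(1−7δ) < 1. -/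
/-!
Every `ℝ`-linear map `ℂ → ℂ` is `v ↦ a v + b v̄`, and when it is the derivative of `f` at `z`,
`a = ∂f/∂z` and `b = ∂f/∂z̄`; in this form the Leibniz rule holds for both coefficients.
Holomorphic maps have `b = 0`, and `|z - 1|` has `a = (z̄ - 1)/(2|z - 1|)` and
`b = (z - 1)/(2|z - 1|)`. With `w = z - 1` this gives `∂f/∂z̄ = λ w³/(2δ|w|)` and
`∂f/∂z = λ(2 - 2w + 5w|w|/(2δ))`, and on `δ ≤ |w| ≤ 2δ` the triangle
inequality yields `|∂f/∂z̄| ≤ 2λδ` and `|∂f/∂z| ≥ λ(2 - 14δ)`.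
-/

/-- The Wirtinger derivative `∂f/∂z` of a map `f : ℂ → ℂ`, computed from its real
Fréchet derivative. -/
noncomputable def wirtDz (f : ℂ → ℂ) (z : ℂ) : ℂ :=
  (fderiv ℝ f z 1 - Complex.I * fderiv ℝ f z Complex.I) / 2

/-- The Wirtinger derivative `∂f/∂z̄` of a map `f : ℂ → ℂ`. -/
noncomputable def wirtDzbar (f : ℂ → ℂ) (z : ℂ) : ℂ :=
  (fderiv ℝ f z 1 + Complex.I * fderiv ℝ f z Complex.I) / 2

open Complex ComplexConjugate

noncomputable def wirtingerCLM (a b : ℂ) : ℂ →L[ℝ] ℂ :=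
  a • (1 : ℂ →L[ℝ] ℂ) + b • conjCLE.toContinuousLinearMap

@[simp]
lemma wirtingerCLM_apply (a b v : ℂ) : wirtingerCLM a b v = a * v + b * conj v := rfl

section WirtingerCLM

variable {f g : ℂ → ℂ} {a b c d z : ℂ}

lemma HasFDerivAt.wirtDz_eq (h : HasFDerivAt f (wirtingerCLM a b) z) : wirtDz f z = a := by
  rw [wirtDz, h.fderiv]
  simp only [wirtingerCLM_apply, map_one, conj_I]
  ring_nf
  rw [I_sq]
  ring

lemma HasFDerivAt.wirtDzbar_eq (h : HasFDerivAt f (wirtingerCLM a b) z) : wirtDzbar f z = b := by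
  rw [wirtDzbar, h.fderiv]
  simp only [wirtingerCLM_apply, map_one, conj_I]
  ring_nf
  rw [I_sq]
  ring

lemma HasDerivAt.hasFDerivAt_wirtingerCLM (h : HasDerivAt f a z) :
    HasFDerivAt f (wirtingerCLM a 0) z := by
  refine h.complexToReal_fderiv.congr_fderiv (ContinuousLinearMap.ext fun v ↦ ?_)
  simp

lemma HasFDerivAt.add_wirtingerCLM (hf : HasFDerivAt f (wirtingerCLM a b) z)
    (hg : HasFDerivAt g (wirtingerCLM c d) z) :
    HasFDerivAt (f + g) (wirtingerCLM (a + c) (b + d)) z := by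
  refine (hf.add hg).congr_fderiv (ContinuousLinearMap.ext fun v ↦ ?_)
  simp only [wirtingerCLM_apply, add_apply]
  ring

lemma HasFDerivAt.mul_wirtingerCLM (hf : HasFDerivAt f (wirtingerCLM a b) z)
    (hg : HasFDerivAt g (wirtingerCLM c d) z) :
    HasFDerivAt (f * g) (wirtingerCLM (f z * c + g z * a) (f z * d + g z * b)) z := by
  refine (hf.mul hg).congr_fderiv (ContinuousLinearMap.ext fun v ↦ ?_)
  simp only [wirtingerCLM_apply, add_apply, smul_apply, smul_eq_mul]
  ring

lemma hasFDerivAt_norm_sub_wirtingerCLM (hz : z ≠ c) :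
    HasFDerivAt (fun z ↦ ((‖z - c‖ : ℝ) : ℂ))
      (wirtingerCLM (conj (z - c) / (2 * ‖z - c‖)) ((z - c) / (2 * ‖z - c‖))) z := by
  have hr : ‖z - c‖ ≠ 0 := norm_ne_zero_iff.mpr (sub_ne_zero.mpr hz)
  have h := (((hasFDerivAt_id z).sub_const c).norm_sq.sqrt (by positivity))
  simp only [Real.sqrt_sq (norm_nonneg _), id] at h
  refine (ofRealCLM.hasFDerivAt.comp z h).congr_fderiv (ContinuousLinearMap.ext fun v ↦ ?_)
  simp only [ContinuousLinearMap.comp_apply, smul_apply, innerSL_apply_apply,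
    ContinuousLinearMap.id_apply, ofRealCLM_apply, wirtingerCLM_apply, Complex.inner, smul_eq_mul,
    nsmul_eq_mul]
  push_cast
  rw [re_eq_add_conj, map_mul, conj_conj]
  field_simp

end WirtingerCLM

lemma hasFDerivAt_beltrami_interpolation (lam δ : ℝ) {z : ℂ} (hz : z ≠ 1) :
    HasFDerivAt
      (fun z ↦ (lam : ℂ) * ((z - 1) ^ 2 * ((‖z - 1‖ : ℝ) : ℂ) / δ + 2 * (z - 1) - (z - 1) ^ 2))
      (wirtingerCLM (lam * (2 - 2 * (z - 1) + 5 * (z - 1) * ‖z - 1‖ / (2 * δ)))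
        (lam * (z - 1) ^ 3 / (2 * ‖z - 1‖ * δ))) z := by
  have hP : HasDerivAt (fun z ↦ (lam : ℂ) * (z - 1) ^ 2 / δ) (lam * (2 * (z - 1)) / δ) z := by
    simpa using (((hasDerivAt_id z).sub_const 1).pow 2).const_mul (lam : ℂ) |>.div_const (δ : ℂ)
  have hQ : HasDerivAt (fun z ↦ (lam : ℂ) * (2 * (z - 1) - (z - 1) ^ 2))
      (lam * (2 - 2 * (z - 1))) z := by
    have hw := (hasDerivAt_id z).sub_const (1 : ℂ)
    simpa using ((hw.const_mul 2).sub (hw.pow 2)).const_mul (lam : ℂ)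
  have h := (hP.hasFDerivAt_wirtingerCLM.mul_wirtingerCLM
    (hasFDerivAt_norm_sub_wirtingerCLM hz)).add_wirtingerCLM hQ.hasFDerivAt_wirtingerCLM
  refine (h.congr_of_eventuallyEq (Filter.Eventually.of_forall fun y ↦ ?_)).congr_fderiv ?_
  · simp only [Pi.add_apply, Pi.mul_apply]
    ring
  have hconj : conj (z - 1) = ‖z - 1‖ ^ 2 / (z - 1) := by
    rw [eq_div_iff (sub_ne_zero.mpr hz), mul_comm, mul_conj, normSq_eq_norm_sq]; push_cast; ring
  congr 1
  · rw [hconj]; field_simp; ring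
  · field_simp; ring

section Estimates

variable {lam δ : ℝ} {w : ℂ}

lemma norm_interpolation_dzbar_le (hlam : 0 < lam) (hδ : 0 < δ) (hw : ‖w‖ ≤ 2 * δ) :
    ‖(lam : ℂ) * w ^ 3 / (2 * ‖w‖ * δ)‖ ≤ 2 * lam * δ := by
  rcases eq_or_ne w 0 with rfl | hw0
  · simp; positivity
  have hr : 0 < ‖w‖ := norm_pos_iff.mpr hw0
  have : ‖(lam : ℂ) * w ^ 3 / (2 * ‖w‖ * δ)‖ = lam * ‖w‖ ^ 2 / (2 * δ) := by
    simp only [norm_div, norm_mul, norm_pow, norm_real, Real.norm_eq_abs, Complex.norm_two,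
      abs_of_pos hlam, abs_of_pos hδ, abs_norm]
    field_simp
  rw [this, div_le_iff₀ (by positivity)]
  nlinarith [pow_le_pow_left₀ hr.le hw 2]

lemma le_norm_interpolation_dz (hlam : 0 < lam) (hδ : 0 < δ) (hw : ‖w‖ ≤ 2 * δ) :
    lam * (2 - 14 * δ) ≤ ‖(lam : ℂ) * (2 - 2 * w + 5 * w * ‖w‖ / (2 * δ))‖ := by
  have hsmall : ‖2 * w - 5 * w * ‖w‖ / (2 * δ)‖ ≤ 14 * δ := calc
    _ ≤ ‖2 * w‖ + ‖5 * w * ‖w‖ / (2 * δ)‖ := norm_sub_le _ _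
    _ = 2 * ‖w‖ + 5 * ‖w‖ ^ 2 / (2 * δ) := by
      simp only [norm_div, norm_mul, norm_real, Real.norm_eq_abs,
        abs_of_pos hδ, abs_norm, Complex.norm_ofNat]
      ring
    _ ≤ 2 * (2 * δ) + 5 * (2 * δ) ^ 2 / (2 * δ) := by gcongr
    _ = 14 * δ := by field_simp; norm_num
  calc lam * (2 - 14 * δ) ≤ lam * (‖(2 : ℂ)‖ - ‖2 * w - 5 * w * ‖w‖ / (2 * δ)‖) := by
        rw [Complex.norm_two]; gcongr
    _ ≤ lam * ‖2 - 2 * w + 5 * w * ‖w‖ / (2 * δ)‖ := by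
        gcongr
        exact (norm_sub_norm_le _ _).trans_eq (congrArg _ (by ring))
    _ = _ := by rw [norm_mul, norm_real, Real.norm_eq_abs, abs_of_pos hlam]

end Estimates

lemma div_le_div_one_sub_seven_mul {lam δ x y : ℝ} (hlam : 0 < lam) (hδ' : δ < 1 / 14)
    (hx₀ : 0 ≤ x) (hx : x ≤ 2 * lam * δ) (hy : lam * (2 - 14 * δ) ≤ y) :
    x / y ≤ δ / (1 - 7 * δ) := by
  have hpos : 0 < lam * (2 - 14 * δ) := by nlinarith
  calc x / y ≤ 2 * lam * δ / (lam * (2 - 14 * δ)) := div_le_div₀ (hx₀.trans hx) hx hpos hy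
    _ = δ / (1 - 7 * δ) := by
        rw [div_eq_div_iff hpos.ne' (by linarith)]; ring

/-- For `f(z) = λ((z−1)²|z−1|/δ + 2(z−1) − (z−1)²)` on the annulus `δ ≤ |z−1| ≤ 2δ`
(`0 < δ < 1/14`, `λ > 0`): `|∂f/∂z̄| ≤ 2λδ`, `|∂f/∂z| ≥ λ(2−14δ)`, and hence the Beltrami
coefficient satisfies `|∂f/∂z̄ / ∂f/∂z| ≤ δ/(1−7δ) < 1`. -/
theorem stmt17 (δ lam : ℝ) (hδ : 0 < δ) (hδ' : δ < 1 / 14) (hlam : 0 < lam)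
    (f : ℂ → ℂ)
    (hf : ∀ z, f z = (lam : ℂ) * ((z - 1) ^ 2 * ((‖z - 1‖ : ℝ) : ℂ) / (δ : ℂ)
      + 2 * (z - 1) - (z - 1) ^ 2)) :
    ∀ z : ℂ, δ ≤ ‖z - 1‖ → ‖z - 1‖ ≤ 2 * δ →
      ‖wirtDzbar f z‖ ≤ 2 * lam * δ ∧
      lam * (2 - 14 * δ) ≤ ‖wirtDz f z‖ ∧
      ‖wirtDzbar f z‖ / ‖wirtDz f z‖ ≤ δ / (1 - 7 * δ) ∧
      δ / (1 - 7 * δ) < 1 := by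
  intro z hz₁ hz₂
  obtain rfl : f = _ := funext hf
  have hz : z ≠ 1 := sub_ne_zero.mp (norm_pos_iff.mp (hδ.trans_le hz₁))
  have hD := hasFDerivAt_beltrami_interpolation lam δ hz
  rw [hD.wirtDz_eq, hD.wirtDzbar_eq]
  have hbar := norm_interpolation_dzbar_le hlam hδ hz₂
  have hdz := le_norm_interpolation_dz hlam hδ hz₂
  exact ⟨hbar, hdz, div_le_div_one_sub_seven_mul hlam hδ' (norm_nonneg _) hbar hdz,
    (div_lt_one (by linarith)).mpr (by linarith)⟩
end
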